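/- Let ξ : ℤ → {0,1} be a recurrent non-periodic bi-infinite word. Then the set of bi-infinite words ζ : ℤ → {0,1} that are recurrent and satisfy F(ζ) = F(ξ) has cardinality 2^{ℵ₀}. -/

import Mathlib

/-- `u` occurs in the bi-infinite word `ξ` starting at position `i`. -/
def FactorAt (ξ : ℤ → Bool) (u : List Bool) (i : ℤ) : Prop :=
  ∀ k : ℕ, k < u.length → u.getD k false = ξ (i + k)

/-- The set of finite factors of the bi-infinite word `ξ`. -/
def Factors (ξ : ℤ → Bool) : Set (List Bool) :=
  {u | ∃ i : ℤ, FactorAt ξ u i}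

/-- `ξ` is recurrent: every factor occurs entirely within `(-∞,i]` and within `[i,∞)`
for every `i`. -/
def Recurrent (ξ : ℤ → Bool) : Prop :=
  ∀ u ∈ Factors ξ, ∀ i : ℤ,
    (∃ j : ℤ, j + u.length ≤ i ∧ FactorAt ξ u j) ∧
    (∃ j : ℤ, i ≤ j ∧ FactorAt ξ u j)

/-- `ξ` is periodic. -/
def BiPeriodic (ξ : ℤ → Bool) : Prop :=
  ∃ p : ℤ, 0 < p ∧ ∀ n : ℤ, ξ n = ξ (n + p)

/-- `u` is right-determining in `F(ξ)`: for every `k` there is exactly one `v` of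
length `k` with `u ++ v ∈ F(ξ)`. -/
def RightDet (ξ : ℤ → Bool) (u : List Bool) : Prop :=
  ∀ k : ℕ, ∃! v : List Bool, v.length = k ∧ u ++ v ∈ Factors ξ

/-- `u` is left-determining in `F(ξ)`. -/
def LeftDet (ξ : ℤ → Bool) (u : List Bool) : Prop :=
  ∀ k : ℕ, ∃! v : List Bool, v.length = k ∧ v ++ u ∈ Factors ξ


/-!
In the Cantor space `ℤ → Bool`, the recurrent words with the same factors as `ξ` form a Gδ set
(having all factors in `F(ξ)` is a closed condition, an occurrence of a given factor to the left
or to the right of a given position an open one), hence a Polish space, and `ξ` lies in it. It has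
no isolated point: by recurrence every such `ζ` agrees on `[-N, N]` with some shift
`n ↦ ζ (n + t)`, `t > 0`, which lies in the set again and differs from `ζ`, since a word with the
factors of the non-periodic `ξ` is not periodic. A nonempty perfect Polish space contains a
Cantor set.
-/

open Topology TopologicalSpace Filter Set Cardinal

theorem IsGδ.polishSpace {X : Type*} [TopologicalSpace X] [PolishSpace X] {s : Set X}
    (hs : IsGδ s) : PolishSpace s := by
  obtain ⟨T, hTopen, hTcount, rfl⟩ := hs
  have := hTcount.to_subtype
  have := fun t : T => (hTopen t t.2).polishSpace
  let f : ⋂₀ T → X × ((t : T) → (t : Set X)) := fun x => (x, fun t => ⟨x, x.2 t t.2⟩)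
  have hrange : range f = {p | ∀ t, (p.2 t : X) = p.1} := by
    refine Subset.antisymm (by rintro _ ⟨x, rfl⟩ t; rfl) fun p hp => ?_
    refine ⟨⟨p.1, fun t ht => hp ⟨t, ht⟩ ▸ (p.2 ⟨t, ht⟩).2⟩, ?_⟩
    exact Prod.ext rfl (funext fun t => Subtype.ext (hp t).symm)
  refine IsClosedEmbedding.polishSpace (f := f)
    ⟨IsEmbedding.of_comp (by fun_prop) continuous_fst IsEmbedding.subtypeVal, ?_⟩
  rw [hrange, ofPred_forall]
  exact isClosed_iInter fun t => isClosed_eq (by fun_prop) continuous_fst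

theorem Cardinal.continuum_le_mk_of_perfectSpace (X : Type*) [TopologicalSpace X]
    [IsCompletelyMetrizableSpace X] [PerfectSpace X] [Nonempty X] : 𝔠 ≤ #X := by
  let := upgradeIsCompletelyMetrizable X
  obtain ⟨f, -, -, hf⟩ := (PerfectSpace.univ_perfect X).exists_nat_bool_injection univ_nonempty
  simpa using lift_mk_le_lift_mk_of_injective hf

lemma factorAt_comp_add_iff {ζ : ℤ → Bool} {u : List Bool} {i t : ℤ} :
    FactorAt (fun n => ζ (n + t)) u i ↔ FactorAt ζ u (i + t) := by
  simp only [FactorAt, add_right_comm]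

lemma factors_comp_add (ζ : ℤ → Bool) (t : ℤ) : Factors (fun n => ζ (n + t)) = Factors ζ := by
  ext u
  simp only [Factors, mem_ofPred_eq, factorAt_comp_add_iff]
  exact ⟨fun ⟨i, h⟩ => ⟨i + t, h⟩, fun ⟨i, h⟩ => ⟨i - t, by rwa [sub_add_cancel]⟩⟩

lemma Recurrent.comp_add {ζ : ℤ → Bool} (h : Recurrent ζ) (t : ℤ) :
    Recurrent (fun n => ζ (n + t)) := by
  intro u hu i
  rw [factors_comp_add] at hu
  obtain ⟨⟨j, hj, hjf⟩, ⟨j', hj', hjf'⟩⟩ := h u hu (i + t)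
  refine ⟨⟨j - t, by omega, ?_⟩, ⟨j' - t, by omega, ?_⟩⟩ <;>
    rwa [factorAt_comp_add_iff, sub_add_cancel]

def window (ζ : ℤ → Bool) (i : ℤ) (m : ℕ) : List Bool :=
  List.ofFn fun k : Fin m => ζ (i + k)

lemma factorAt_window_iff {ζ η : ℤ → Bool} {i j : ℤ} {m : ℕ} :
    FactorAt η (window ζ i m) j ↔ ∀ k < m, ζ (i + k) = η (j + k) := by
  simp only [FactorAt, window, List.length_ofFn]
  refine forall₂_congr fun k hk => ?_
  rw [List.getD_eq_getElem _ _ (by simpa using hk), List.getElem_ofFn]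

lemma window_mem_factors (ζ : ℤ → Bool) (i : ℤ) (m : ℕ) : window ζ i m ∈ Factors ζ :=
  ⟨i, factorAt_window_iff.2 fun _ _ => rfl⟩

lemma Recurrent.exists_pos_shift_eq_of_natAbs_le {ζ : ℤ → Bool} (h : Recurrent ζ) (N : ℕ) :
    ∃ t : ℤ, 0 < t ∧ ∀ n : ℤ, n.natAbs ≤ N → ζ (n + t) = ζ n := by
  obtain ⟨-, j, hj, hocc⟩ := h _ (window_mem_factors ζ (-N) (2 * N + 1)) (-N + 1)
  refine ⟨j + N, by omega, fun n hn => ?_⟩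
  have := factorAt_window_iff.1 hocc (n + N).toNat (by omega)
  rw [Int.toNat_of_nonneg (by omega)] at this
  convert this.symm using 2 <;> ring

lemma not_biPeriodic_of_factors_subset {ξ ζ : ℤ → Bool} (hξ : ¬ BiPeriodic ξ)
    (h : Factors ξ ⊆ Factors ζ) : ¬ BiPeriodic ζ := by
  rintro ⟨p, hp, hper⟩
  refine hξ ⟨p, hp, fun n => ?_⟩
  obtain ⟨j, hj⟩ := h (window_mem_factors ξ n (p.toNat + 1))
  have hocc := factorAt_window_iff.1 hj
  have h0 := hocc 0 (by omega)
  have hp' := hocc p.toNat (by omega)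
  rw [Int.toNat_of_nonneg hp.le] at hp'
  simp only [Nat.cast_zero, add_zero] at h0
  rw [h0, hp', hper]

lemma isClopen_setOf_factorAt (u : List Bool) (i : ℤ) :
    IsClopen {ζ : ℤ → Bool | FactorAt ζ u i} := by
  have hcont : Continuous fun (ζ : ℤ → Bool) (k : Fin u.length) => ζ (i + k) :=
    continuous_pi fun k => continuous_apply _
  convert (isClopen_discrete {v | ∀ k : Fin u.length, u[k] = v k}).preimage hcont
  ext ζ
  simp only [FactorAt, mem_ofPred_eq, mem_preimage, Fin.forall_iff]
  exact forall₂_congr fun k hk => by rw [List.getD_eq_getElem _ _ hk]; rfl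

lemma isOpen_setOf_exists_factorAt (u : List Bool) (P : ℤ → Prop) :
    IsOpen {ζ : ℤ → Bool | ∃ j, P j ∧ FactorAt ζ u j} := by
  simp only [ofPred_exists, ofPred_and]
  exact isOpen_iUnion fun j => isOpen_const.inter (isClopen_setOf_factorAt u j).isOpen

lemma isClosed_setOf_factors_subset (ξ : ℤ → Bool) :
    IsClosed {ζ : ℤ → Bool | Factors ζ ⊆ Factors ξ} := by
  have : {ζ : ℤ → Bool | Factors ζ ⊆ Factors ξ} =
      ⋂ u ∈ (Factors ξ)ᶜ, ⋂ i, {ζ | FactorAt ζ u i}ᶜ := by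
    ext ζ
    simp only [mem_ofPred_eq, mem_iInter, mem_compl_iff, subset_def]
    exact ⟨fun h u hu i hi => hu (h u ⟨i, hi⟩), fun h u ⟨i, hi⟩ => by_contra fun hu => h u hu i hi⟩
  rw [this]
  exact isClosed_biInter fun u _ =>
    isClosed_iInter fun i => (isClopen_setOf_factorAt u i).compl.isClosed

def recurrentWithFactors (ξ : ℤ → Bool) : Set (ℤ → Bool) :=
  {ζ | Recurrent ζ ∧ Factors ζ = Factors ξ}

lemma recurrentWithFactors_eq (ξ : ℤ → Bool) : recurrentWithFactors ξ =
    {ζ | Factors ζ ⊆ Factors ξ} ∩ ⋂ u ∈ Factors ξ, ⋂ i : ℤ,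
      {ζ | ∃ j, j + u.length ≤ i ∧ FactorAt ζ u j} ∩ {ζ | ∃ j, i ≤ j ∧ FactorAt ζ u j} := by
  ext ζ
  simp only [recurrentWithFactors, mem_inter_iff, mem_iInter, mem_ofPred_eq]
  constructor
  · rintro ⟨hrec, heq⟩
    rw [← heq]
    exact ⟨subset_rfl, hrec⟩
  · rintro ⟨hsub, hocc⟩
    have heq : Factors ζ = Factors ξ :=
      hsub.antisymm fun u hu => let ⟨j, _, h⟩ := (hocc u hu 0).2; ⟨j, h⟩
    exact ⟨fun u hu => hocc u (heq ▸ hu), heq⟩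

lemma isGδ_recurrentWithFactors (ξ : ℤ → Bool) : IsGδ (recurrentWithFactors ξ) := by
  rw [recurrentWithFactors_eq]
  refine (isClosed_setOf_factors_subset ξ).isGδ.inter
    (.biInter (to_countable _) fun u _ => .iInter_of_isOpen fun i => ?_)
  exact (isOpen_setOf_exists_factorAt u _).inter (isOpen_setOf_exists_factorAt u _)

lemma comp_add_mem_recurrentWithFactors {ξ ζ : ℤ → Bool} (h : ζ ∈ recurrentWithFactors ξ)
    (t : ℤ) : (fun n => ζ (n + t)) ∈ recurrentWithFactors ξ :=
  ⟨h.1.comp_add t, (factors_comp_add ζ t).trans h.2⟩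

lemma perfectSpace_recurrentWithFactors {ξ : ℤ → Bool} (hξ : ¬ BiPeriodic ξ) :
    PerfectSpace (recurrentWithFactors ξ) := by
  refine ⟨preperfect_iff_nhds.2 ?_⟩
  rintro ⟨ζ, hζ⟩ - U hU
  choose t ht hshift using hζ.1.exists_pos_shift_eq_of_natAbs_le
  let η : ℕ → recurrentWithFactors ξ := fun N =>
    ⟨fun n => ζ (n + t N), comp_add_mem_recurrentWithFactors hζ (t N)⟩
  have hlim : Tendsto η atTop (𝓝 ⟨ζ, hζ⟩) := tendsto_subtype_rng.2 <| tendsto_pi_nhds.2 fun n =>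
    tendsto_nhds_of_eventually_eq <| (eventually_ge_atTop n.natAbs).mono fun N hN =>
      hshift N n (by omega)
  obtain ⟨N, hN⟩ := (hlim.eventually_mem hU).exists
  refine ⟨η N, ⟨hN, trivial⟩, fun heq => ?_⟩
  refine not_biPeriodic_of_factors_subset hξ hζ.2.symm.subset ⟨t N, ht N, fun n => ?_⟩
  exact (congrFun (congrArg Subtype.val heq) n).symm

theorem continuum_many_recurrent_words_with_same_factors (ξ : ℤ → Bool)
    (hrec : Recurrent ξ) (hnp : ¬ BiPeriodic ξ) :
    Cardinal.mk {ζ : ℤ → Bool // Recurrent ζ ∧ Factors ζ = Factors ξ} =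
      Cardinal.continuum := by
  have : PolishSpace (ℤ → Bool) := {}
  have := (isGδ_recurrentWithFactors ξ).polishSpace
  have := perfectSpace_recurrentWithFactors hnp
  have : Nonempty (recurrentWithFactors ξ) := ⟨⟨ξ, hrec, rfl⟩⟩
  refine le_antisymm ?_ (continuum_le_mk_of_perfectSpace (recurrentWithFactors ξ))
  calc #{ζ : ℤ → Bool // Recurrent ζ ∧ Factors ζ = Factors ξ} ≤ #(ℤ → Bool) := mk_subtype_le _
    _ = 𝔠 := by simp
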